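/- For any α ∈ M+^1(C[X₁]×C[X₂]) there exists a rescaled probability measure α̃ = dil_{ϑ_{α,1},1}(α) with the same 1-homogeneous marginals as α, supported in the truncated product cone C_{R}[X₁,X₂] with R = r*(α) = ∫(r₁+r₂)dα + α({(o₁,o₂)}), where ϑ_{α,1}(y) = (r₁(y)+r₂(y))/r*(α) for y ≠ (o₁,o₂) and ϑ_{α,1}((o₁,o₂)) = 1/r*(α). -/

import Mathlib

open MeasureTheory Topology Filter Set
open scoped NNReal ENNReal BoundedContinuousFunction

noncomputable section

namespace UOT

variable (X : Type*)

/-- The equivalence relation on `X × ℝ≥0` identifying all points with radius `0`. -/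
def coneSetoid : Setoid (X × ℝ≥0) where
  r p q := p = q ∨ (p.2 = 0 ∧ q.2 = 0)
  iseqv := by
    refine ⟨fun p => Or.inl rfl, ?_, ?_⟩
    · rintro p q (rfl | h)
      · exact Or.inl rfl
      · exact Or.inr ⟨h.2, h.1⟩
    · rintro p q r hpq hqr
      rcases hpq with rfl | h
      · exact hqr
      · rcases hqr with rfl | h'
        · exact Or.inr h
        · exact Or.inr ⟨h.1, h'.2⟩

/-- The geometric cone over `X`. -/
def Cone := Quotient (coneSetoid X)

/-- The canonical map sending `(x, r)` to the point `[x, r]` of the cone. -/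
def Cone.mk (x : X) (r : ℝ≥0) : Cone X := Quotient.mk (coneSetoid X) (x, r)

/-- The vertex `o` of the cone. -/
def Cone.vertex [Nonempty X] : Cone X := Cone.mk X (Classical.arbitrary X) 0

/-- The radial coordinate `r` of a point of the cone. -/
def Cone.radius : Cone X → ℝ≥0 :=
  Quotient.lift (fun p => p.2) (by
    rintro p q (rfl | ⟨h1, h2⟩)
    · rfl
    · simp [h1, h2])

/-- The base point `x` of a point of the cone (an arbitrary point of `X` at the vertex). -/
def Cone.basePt [Nonempty X] : Cone X → X :=
  Quotient.lift (fun p => if p.2 = 0 then Classical.arbitrary X else p.1) (by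
    rintro p q (rfl | ⟨h1, h2⟩)
    · rfl
    · simp [h1, h2])

/-- Radial rescaling `λ • [x, r] = [x, λ * r]` on the cone. -/
def Cone.smul (c : ℝ≥0) : Cone X → Cone X :=
  Quotient.lift (fun p => Cone.mk X p.1 (c * p.2)) (by
    rintro p q (rfl | ⟨h1, h2⟩)
    · rfl
    · apply Quotient.sound
      exact Or.inr ⟨by simp [h1], by simp [h2]⟩)

variable [TopologicalSpace X]

/-- The cone topology: a set is open iff its preimage in `X × ℝ≥0` is open and, when it
contains the vertex, it contains a whole strip `{[x, r] : r < ε}`. -/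
instance : TopologicalSpace (Cone X) where
  IsOpen U := IsOpen ((fun p : X × ℝ≥0 => Cone.mk X p.1 p.2) ⁻¹' U) ∧
      ∀ x : X, Cone.mk X x 0 ∈ U →
        ∃ ε : ℝ≥0, 0 < ε ∧ ∀ (y : X) (r : ℝ≥0), r < ε → Cone.mk X y r ∈ U
  isOpen_univ := ⟨isOpen_univ, fun _ _ => ⟨1, one_pos, fun _ _ _ => mem_univ _⟩⟩
  isOpen_inter := by
    rintro s t ⟨hs1, hs2⟩ ⟨ht1, ht2⟩
    refine ⟨hs1.inter ht1, fun x hx => ?_⟩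
    obtain ⟨ε₁, hε₁, h₁⟩ := hs2 x hx.1
    obtain ⟨ε₂, hε₂, h₂⟩ := ht2 x hx.2
    exact ⟨min ε₁ ε₂, lt_min hε₁ hε₂, fun y r hr =>
      ⟨h₁ y r (hr.trans_le (min_le_left _ _)), h₂ y r (hr.trans_le (min_le_right _ _))⟩⟩
  isOpen_sUnion := by
    intro S hS
    constructor
    · rw [Set.preimage_sUnion]
      exact isOpen_biUnion fun t ht => (hS t ht).1
    · intro x hx
      obtain ⟨t, ht, hxt⟩ := hx
      obtain ⟨ε, hε, h⟩ := (hS t ht).2 x hxt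
      exact ⟨ε, hε, fun y r hr => ⟨t, ht, h y r hr⟩⟩

instance : MeasurableSpace (Cone X) := borel (Cone X)

instance : BorelSpace (Cone X) := ⟨rfl⟩

/-- On a product of cones we use the Borel σ-algebra of the product topology. -/
instance (priority := 2000) prodConeMeasurableSpace (X₁ X₂ : Type*) [TopologicalSpace X₁]
    [TopologicalSpace X₂] : MeasurableSpace (Cone X₁ × Cone X₂) :=
  borel (Cone X₁ × Cone X₂)

instance (priority := 2000) prodConeBorelSpace (X₁ X₂ : Type*) [TopologicalSpace X₁]
    [TopologicalSpace X₂] : BorelSpace (Cone X₁ × Cone X₂) := ⟨rfl⟩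

variable {X}

/-- The scaled Dirac measure `r • δ_x` as a finite measure. -/
def diracFM {Y : Type*} [MeasurableSpace Y] (x : Y) : FiniteMeasure Y :=
  ⟨Measure.dirac x, inferInstance⟩

/-- The canonical map `[x, r] ↦ r • δ_x` from the cone to finite measures. -/
def coneToFM (X : Type*) [TopologicalSpace X] [MeasurableSpace X] :
    Cone X → FiniteMeasure X :=
  Quotient.lift (fun p : X × ℝ≥0 => p.2 • diracFM p.1) (by
    rintro p q (rfl | ⟨h1, h2⟩)
    · rfl
    · simp [h1, h2])

/-- A finite measure is discrete if it is a finite nonnegative combination of Dirac masses. -/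
def IsDiscreteFM {Y : Type*} [MeasurableSpace Y] (μ : FiniteMeasure Y) : Prop :=
  ∃ (n : ℕ) (c : Fin n → ℝ≥0) (x : Fin n → Y), μ = ∑ i, c i • diracFM (x i)

section Product

variable {X₁ X₂ : Type*} [TopologicalSpace X₁] [TopologicalSpace X₂]

/-- Radial `1`-homogeneity of a cost function on the product cone. -/
def RadiallyHomogeneous (H : Cone X₁ × Cone X₂ → ℝ≥0∞) : Prop :=
  ∀ (x₁ : X₁) (x₂ : X₂) (r₁ r₂ lam : ℝ≥0), 0 < lam →
    H (Cone.mk X₁ x₁ (lam * r₁), Cone.mk X₂ x₂ (lam * r₂)) =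
      (lam : ℝ≥0∞) * H (Cone.mk X₁ x₁ r₁, Cone.mk X₂ x₂ r₂)

/-- Radial convexity of a cost function on the product cone: every radial section is convex. -/
def RadiallyConvex (H : Cone X₁ × Cone X₂ → ℝ≥0∞) : Prop :=
  ∀ (x₁ : X₁) (x₂ : X₂) (a₁ a₂ b₁ b₂ t : ℝ≥0), t ≤ 1 →
    H (Cone.mk X₁ x₁ (t * a₁ + (1 - t) * b₁), Cone.mk X₂ x₂ (t * a₂ + (1 - t) * b₂)) ≤
      (t : ℝ≥0∞) * H (Cone.mk X₁ x₁ a₁, Cone.mk X₂ x₂ a₂) +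
        ((1 - t : ℝ≥0) : ℝ≥0∞) * H (Cone.mk X₁ x₁ b₁, Cone.mk X₂ x₂ b₂)

/-- Properness: `H` is not identically `+∞`. -/
def ProperCost (H : Cone X₁ × Cone X₂ → ℝ≥0∞) : Prop := ∃ y, H y ≠ ⊤

variable [MeasurableSpace X₁] [MeasurableSpace X₂]

/-- First `p`-homogeneous marginal `h₁^p(α) = (x₁)_♯ (r₁^p · α)`. -/
def homMarginalFst [Nonempty X₁] (p : ℝ) (α : Measure (Cone X₁ × Cone X₂)) : Measure X₁ :=
  Measure.map (fun y : Cone X₁ × Cone X₂ => Cone.basePt X₁ y.1)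
    (α.withDensity fun y => (Cone.radius X₁ y.1 : ℝ≥0∞) ^ p)

/-- Second `p`-homogeneous marginal `h₂^p(α) = (x₂)_♯ (r₂^p · α)`. -/
def homMarginalSnd [Nonempty X₂] (p : ℝ) (α : Measure (Cone X₁ × Cone X₂)) : Measure X₂ :=
  Measure.map (fun y : Cone X₁ × Cone X₂ => Cone.basePt X₂ y.2)
    (α.withDensity fun y => (Cone.radius X₂ y.2 : ℝ≥0∞) ^ p)

variable [Nonempty X₁] [Nonempty X₂]

/-- `α ∈ H^p(μ₁, μ₂)`: a (finite Radon) homogeneous coupling with finite `p`-th radial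
moments and `p`-homogeneous marginals `μ₁, μ₂`. -/
def IsHomCoupling (p : ℝ) (α : Measure (Cone X₁ × Cone X₂))
    (μ₁ : Measure X₁) (μ₂ : Measure X₂) : Prop :=
  IsFiniteMeasure α ∧
    (∫⁻ y, ((Cone.radius X₁ y.1 : ℝ≥0∞) ^ p + (Cone.radius X₂ y.2 : ℝ≥0∞) ^ p) ∂α) ≠ ⊤ ∧
    homMarginalFst p α = μ₁ ∧ homMarginalSnd p α = μ₂

/-- The unbalanced optimal transport cost `U_H`. -/
def UH (H : Cone X₁ × Cone X₂ → ℝ≥0∞) (μ₁ : Measure X₁) (μ₂ : Measure X₂) : ℝ≥0∞ :=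
  ⨅ (α : Measure (Cone X₁ × Cone X₂)) (_ : IsHomCoupling 1 α μ₁ μ₂), ∫⁻ y, H y ∂α

/-- The truncated product cone `C_R[X₁, X₂]`: both radii at most `R`. -/
def prodConeTrunc (R : ℝ≥0) : Set (Cone X₁ × Cone X₂) :=
  {y | Cone.radius X₁ y.1 ≤ R ∧ Cone.radius X₂ y.2 ≤ R}

/-- Membership of a pair of bounded continuous potentials in the dual constraint set `Φ_H`. -/
def InPhi (H : Cone X₁ × Cone X₂ → ℝ≥0∞) (φ₁ : X₁ →ᵇ ℝ) (φ₂ : X₂ →ᵇ ℝ) : Prop :=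
  ∀ (x₁ : X₁) (x₂ : X₂) (r₁ r₂ : ℝ≥0),
    ENNReal.ofReal (φ₁ x₁ * r₁ + φ₂ x₂ * r₂) ≤ H (Cone.mk X₁ x₁ r₁, Cone.mk X₂ x₂ r₂)

/-- `H`-cyclical monotonicity of a subset of the product cone. -/
def HCyclicallyMonotone (H : Cone X₁ × Cone X₂ → ℝ≥0∞)
    (Γ : Set (Cone X₁ × Cone X₂)) : Prop :=
  ∀ (N : ℕ) (y : Fin N → Cone X₁ × Cone X₂), (∀ i, y i ∈ Γ) → ∀ σ : Equiv.Perm (Fin N),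
    ∑ i, H (y i) ≤ ∑ i, H ((y i).1, (y (σ i)).2)

/-- A radial convex cone in the product cone. -/
def IsRadialConvexCone (Γ : Set (Cone X₁ × Cone X₂)) : Prop :=
  ∀ (x₁ : X₁) (x₂ : X₂) (a₁ a₂ b₁ b₂ lam mu : ℝ≥0),
    (Cone.mk X₁ x₁ a₁, Cone.mk X₂ x₂ a₂) ∈ Γ → (Cone.mk X₁ x₁ b₁, Cone.mk X₂ x₂ b₂) ∈ Γ →
      (Cone.mk X₁ x₁ (lam * a₁ + mu * b₁), Cone.mk X₂ x₂ (lam * a₂ + mu * b₂)) ∈ Γ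

end Product

/-- Convexity (with scalars in `ℝ≥0`) of an `ℝ≥0∞`-valued function on a module. -/
def ConvexENN {E : Type*} [AddCommMonoid E] [SMul ℝ≥0 E] (f : E → ℝ≥0∞) : Prop :=
  ∀ (a b : E) (t : ℝ≥0), t ≤ 1 →
    f (t • a + (1 - t) • b) ≤ (t : ℝ≥0∞) * f a + ((1 - t : ℝ≥0) : ℝ≥0∞) * f b

/-- The lower semicontinuous convex envelope: the largest lsc convex function below `F`. -/
def lscConvexHull {E : Type*} [TopologicalSpace E] [AddCommMonoid E] [SMul ℝ≥0 E]
    (F : E → ℝ≥0∞) : E → ℝ≥0∞ :=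
  fun e => ⨆ (g : E → ℝ≥0∞) (_ : LowerSemicontinuous g ∧ ConvexENN g ∧ g ≤ F), g e

/-- The convex envelope: the largest convex function below `F`. -/
def convexHullFn {E : Type*} [AddCommMonoid E] [SMul ℝ≥0 E] (F : E → ℝ≥0∞) : E → ℝ≥0∞ :=
  fun e => ⨆ (g : E → ℝ≥0∞) (_ : ConvexENN g ∧ g ≤ F), g e

/-- The lower semicontinuous envelope: the largest lsc function below `F`. -/
def lscHull {E : Type*} [TopologicalSpace E] (F : E → ℝ≥0∞) : E → ℝ≥0∞ :=
  fun e => ⨆ (g : E → ℝ≥0∞) (_ : LowerSemicontinuous g ∧ g ≤ F), g e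

end UOT
namespace UOT

/-- The dilation `dil_{ϑ,p}(α)`: push forward `ϑ^p · α` under the radial rescaling
`(y₁, y₂) ↦ (ϑ⁻¹ • y₁, ϑ⁻¹ • y₂)`. -/
def dil {X₁ X₂ : Type*} [TopologicalSpace X₁] [TopologicalSpace X₂]
    (p : ℝ) (ϑ : Cone X₁ × Cone X₂ → ℝ≥0) (α : Measure (Cone X₁ × Cone X₂)) :
    Measure (Cone X₁ × Cone X₂) :=
  Measure.map (fun y => (Cone.smul X₁ (ϑ y)⁻¹ y.1, Cone.smul X₂ (ϑ y)⁻¹ y.2))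
    (α.withDensity fun y => (ϑ y : ℝ≥0∞) ^ p)

variable {X₁ X₂ : Type*} [TopologicalSpace X₁] [TopologicalSpace X₂]
  [Nonempty X₁] [Nonempty X₂]

/-- The normalization constant `r*(α) = ∫ (r₁ + r₂) dα + α({(o₁, o₂)})`. -/
def rStar (α : Measure (Cone X₁ × Cone X₂)) : ℝ≥0 :=
  (∫⁻ y, ((Cone.radius X₁ y.1 : ℝ≥0∞) + (Cone.radius X₂ y.2 : ℝ≥0∞)) ∂α
    + α {(Cone.vertex X₁, Cone.vertex X₂)}).toNNReal

open scoped Classical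

/-- The normalizing weight `ϑ_{α,1}`: `(r₁ + r₂)/r*(α)` away from the vertex pair and
`1/r*(α)` at the vertex pair. -/
def thetaStar (α : Measure (Cone X₁ × Cone X₂)) : Cone X₁ × Cone X₂ → ℝ≥0 :=
  fun y =>
    if y = (Cone.vertex X₁, Cone.vertex X₂) then (rStar α)⁻¹
    else (Cone.radius X₁ y.1 + Cone.radius X₂ y.2) / rStar α


section Aux

set_option linter.unusedSectionVars false

variable {X : Type*} [TopologicalSpace X]

theorem Cone.mk_zero [Nonempty X] (x : X) : Cone.mk X x 0 = Cone.vertex X :=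
  Quotient.sound (Or.inr ⟨rfl, rfl⟩)

theorem Cone.mk_eq_mk {x y : X} {r s : ℝ≥0} :
    Cone.mk X x r = Cone.mk X y s ↔ ((x, r) = (y, s) ∨ (r = 0 ∧ s = 0)) :=
  ⟨fun h => Quotient.exact h, fun h => Quotient.sound h⟩

theorem Cone.radius_mk (x : X) (r : ℝ≥0) : Cone.radius X (Cone.mk X x r) = r := rfl

theorem Cone.smul_mk (c : ℝ≥0) (x : X) (r : ℝ≥0) :
    Cone.smul X c (Cone.mk X x r) = Cone.mk X x (c * r) := rfl

theorem Cone.radius_smul (c : ℝ≥0) (z : Cone X) :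
    Cone.radius X (Cone.smul X c z) = c * Cone.radius X z := by
  obtain ⟨p, rfl⟩ := Quotient.exists_rep z
  rfl

theorem Cone.radius_vertex [Nonempty X] : Cone.radius X (Cone.vertex X) = 0 := rfl

theorem Cone.smul_vertex [Nonempty X] (c : ℝ≥0) :
    Cone.smul X c (Cone.vertex X) = Cone.vertex X :=
  Quotient.sound (Or.inr ⟨mul_zero c, rfl⟩)

theorem Cone.eq_vertex [Nonempty X] {z : Cone X} (h : Cone.radius X z = 0) :
    z = Cone.vertex X := by
  obtain ⟨p, rfl⟩ := Quotient.exists_rep z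
  exact Quotient.sound (Or.inr ⟨h, rfl⟩)

theorem Cone.basePt_mk_ne [Nonempty X] (x : X) {r : ℝ≥0} (h : r ≠ 0) :
    Cone.basePt X (Cone.mk X x r) = x := if_neg h

theorem Cone.basePt_eq_arbitrary [Nonempty X] {z : Cone X} (h : Cone.radius X z = 0) :
    Cone.basePt X z = Classical.arbitrary X := by
  obtain ⟨p, rfl⟩ := Quotient.exists_rep z
  exact if_pos h

theorem Cone.basePt_smul [Nonempty X] {c : ℝ≥0} (hc : c ≠ 0) (z : Cone X) :
    Cone.basePt X (Cone.smul X c z) = Cone.basePt X z := by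
  obtain ⟨⟨x, r⟩, rfl⟩ := Quotient.exists_rep z
  show (if c * r = 0 then Classical.arbitrary X else x) = (if r = 0 then Classical.arbitrary X else x)
  simp [mul_eq_zero, hc]

theorem Cone.isOpen_iff (U : Set (Cone X)) :
    IsOpen U ↔ (IsOpen ((fun p : X × ℝ≥0 => Cone.mk X p.1 p.2) ⁻¹' U) ∧
      ∀ x : X, Cone.mk X x 0 ∈ U →
        ∃ ε : ℝ≥0, 0 < ε ∧ ∀ (y : X) (r : ℝ≥0), r < ε → Cone.mk X y r ∈ U) :=
  Iff.rfl

theorem Cone.continuous_mk : Continuous (fun p : X × ℝ≥0 => Cone.mk X p.1 p.2) :=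
  continuous_def.2 fun U hU => ((Cone.isOpen_iff U).1 hU).1

theorem Cone.continuous_radius : Continuous (Cone.radius X) := by
  rw [continuous_def]
  intro V hV
  rw [Cone.isOpen_iff]
  constructor
  · exact hV.preimage continuous_snd
  · intro x hx
    have h0 : (0 : ℝ≥0) ∈ V := hx
    obtain ⟨ε, hε, hsub⟩ := NNReal.nhds_zero_basis.mem_iff.1 (hV.mem_nhds h0)
    exact ⟨ε, hε, fun y r hr => hsub hr⟩

theorem Cone.continuous_smul_pair :
    Continuous (fun p : ℝ≥0 × Cone X => Cone.smul X p.1 p.2) := by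
  rw [continuous_def]
  intro U hU
  rw [isOpen_prod_iff]
  intro c z hcz
  obtain ⟨⟨x, r⟩, rfl⟩ := Quotient.exists_rep z
  rcases eq_or_ne (c * r) 0 with h0 | h0
  · have hx0 : Cone.mk X x 0 ∈ U := by
      rw [← h0]
      exact hcz
    obtain ⟨ε, hε, hsub⟩ := ((Cone.isOpen_iff U).1 hU).2 x hx0
    rcases eq_or_ne r 0 with hr | hr
    · refine ⟨Iio (c + 1), Cone.radius X ⁻¹' Iio (ε / (c + 1)), isOpen_Iio,
        isOpen_Iio.preimage Cone.continuous_radius, lt_add_of_pos_right c zero_lt_one, ?_, ?_⟩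
      · have : r < ε / (c + 1) := by
          rw [hr]; exact div_pos hε (by positivity)
        exact this
      · rintro ⟨c', z'⟩ ⟨hc', hz'⟩
        obtain ⟨⟨y, s⟩, rfl⟩ := Quotient.exists_rep z'
        show Cone.mk X y (c' * s) ∈ U
        refine hsub y _ ?_
        calc c' * s < (c + 1) * (ε / (c + 1)) :=
              mul_lt_mul'' hc' hz' (zero_le) (zero_le)
          _ = ε := by rw [mul_comm, div_mul_cancel₀ _ (by positivity : c + 1 ≠ 0)]
    · have hc : c = 0 := by
        rcases mul_eq_zero.1 h0 with h | h
        · exact h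
        · exact absurd h hr
      refine ⟨Iio (ε / (r + 1)), Cone.radius X ⁻¹' Iio (r + 1), isOpen_Iio,
        isOpen_Iio.preimage Cone.continuous_radius, ?_, ?_, ?_⟩
      · rw [hc]; exact div_pos hε (by positivity)
      · have : r < r + 1 := lt_add_of_pos_right r zero_lt_one
        exact this
      · rintro ⟨c', z'⟩ ⟨hc', hz'⟩
        obtain ⟨⟨y, s⟩, rfl⟩ := Quotient.exists_rep z'
        show Cone.mk X y (c' * s) ∈ U
        refine hsub y _ ?_
        calc c' * s < (ε / (r + 1)) * (r + 1) :=
              mul_lt_mul'' hc' hz' (zero_le) (zero_le)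
          _ = ε := div_mul_cancel₀ _ (by positivity : r + 1 ≠ 0)
  · have hr : r ≠ 0 := right_ne_zero_of_mul h0
    have hW : IsOpen ((fun p : X × ℝ≥0 => Cone.mk X p.1 p.2) ⁻¹' U) :=
      ((Cone.isOpen_iff U).1 hU).1
    have hφ : Continuous (fun q : ℝ≥0 × (X × ℝ≥0) => (q.2.1, q.1 * q.2.2)) :=
      (continuous_fst.comp continuous_snd).prodMk
        (continuous_fst.mul (continuous_snd.comp continuous_snd))
    have hopen := hW.preimage hφ
    have hmem : (c, (x, r)) ∈ (fun q : ℝ≥0 × (X × ℝ≥0) => (q.2.1, q.1 * q.2.2)) ⁻¹'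
        ((fun p : X × ℝ≥0 => Cone.mk X p.1 p.2) ⁻¹' U) := hcz
    obtain ⟨u, w, hu, hw, hcu, hxw, hsub⟩ := isOpen_prod_iff.1 hopen c (x, r) hmem
    refine ⟨u, {z | ∃ p ∈ w, p.2 ≠ 0 ∧ z = Cone.mk X p.1 p.2}, hu, ?_, hcu,
      ⟨(x, r), hxw, hr, rfl⟩, ?_⟩
    · rw [Cone.isOpen_iff]
      constructor
      · have hset : (fun p : X × ℝ≥0 => Cone.mk X p.1 p.2) ⁻¹'
            {z | ∃ p ∈ w, p.2 ≠ 0 ∧ z = Cone.mk X p.1 p.2} = w ∩ {p | p.2 ≠ 0} := by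
          ext ⟨y, s⟩
          simp only [mem_preimage, mem_setOf_eq, mem_inter_iff]
          constructor
          · rintro ⟨⟨a, b⟩, hpw, hpb, hmk⟩
            rcases Cone.mk_eq_mk.1 hmk with heq | ⟨hs0, hb0⟩
            · obtain ⟨rfl, rfl⟩ := Prod.mk.injEq .. ▸ (Prod.ext_iff.1 heq)
              exact ⟨hpw, hpb⟩
            · exact absurd hb0 hpb
          · rintro ⟨hyw, hs⟩
            exact ⟨(y, s), hyw, hs, rfl⟩
        rw [hset]
        exact hw.inter (isOpen_compl_singleton.preimage continuous_snd)
      · intro y hy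
        obtain ⟨⟨a, b⟩, _, hb, hmk⟩ := hy
        rcases Cone.mk_eq_mk.1 hmk with heq | ⟨_, hb0⟩
        · exact absurd (Prod.ext_iff.1 heq).2.symm hb
        · exact absurd hb0 hb
    · rintro ⟨c', z'⟩ ⟨hc', hz'⟩
      obtain ⟨⟨a, b⟩, hpw, _, rfl⟩ := hz'
      show Cone.mk X a (c' * b) ∈ U
      exact hsub (Set.mk_mem_prod hc' hpw)

theorem Cone.measurable_basePt [Nonempty X] [MeasurableSpace X] [BorelSpace X] :
    Measurable (Cone.basePt X) := by
  apply measurable_of_isOpen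
  intro A hA'
  have hV : MeasurableSet {z : Cone X | Cone.radius X z = 0} :=
    Cone.continuous_radius.measurable (measurableSet_singleton (0 : ℝ≥0))
  have hopen : IsOpen {z : Cone X | Cone.radius X z ≠ 0 ∧ Cone.basePt X z ∈ A} := by
    rw [Cone.isOpen_iff]
    constructor
    · have hset : (fun p : X × ℝ≥0 => Cone.mk X p.1 p.2) ⁻¹'
          {z : Cone X | Cone.radius X z ≠ 0 ∧ Cone.basePt X z ∈ A}
          = {p : X × ℝ≥0 | p.2 ≠ 0 ∧ p.1 ∈ A} := by
        ext ⟨y, s⟩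
        simp only [mem_preimage, mem_setOf_eq, Cone.radius_mk]
        constructor
        · rintro ⟨h1, h2⟩
          rw [Cone.basePt_mk_ne y h1] at h2
          exact ⟨h1, h2⟩
        · rintro ⟨h1, h2⟩
          rw [Cone.basePt_mk_ne y h1]
          exact ⟨h1, h2⟩
      rw [hset]
      have : {p : X × ℝ≥0 | p.2 ≠ 0 ∧ p.1 ∈ A} =
          (Prod.snd ⁻¹' {(0 : ℝ≥0)}ᶜ) ∩ (Prod.fst ⁻¹' A) := rfl
      rw [this]
      exact (isOpen_compl_singleton.preimage continuous_snd).inter (hA'.preimage continuous_fst)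
    · intro x hx
      exact absurd (Cone.radius_mk x 0) hx.1
  have hsplit : Cone.basePt X ⁻¹' A =
      {z : Cone X | Cone.radius X z ≠ 0 ∧ Cone.basePt X z ∈ A} ∪
      ({z : Cone X | Cone.radius X z = 0} ∩ Cone.basePt X ⁻¹' A) := by
    ext z
    by_cases hz : Cone.radius X z = 0 <;> simp [hz]
  rw [hsplit]
  refine hopen.measurableSet.union ?_
  by_cases harb : Classical.arbitrary X ∈ A
  · have : {z : Cone X | Cone.radius X z = 0} ∩ Cone.basePt X ⁻¹' A =
        {z : Cone X | Cone.radius X z = 0} := by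
      apply inter_eq_left.2
      intro z hz
      show Cone.basePt X z ∈ A
      rw [Cone.basePt_eq_arbitrary hz]
      exact harb
    rw [this]; exact hV
  · have : {z : Cone X | Cone.radius X z = 0} ∩ Cone.basePt X ⁻¹' A = ∅ := by
      apply eq_empty_iff_forall_notMem.2
      rintro z ⟨hz, hzA⟩
      have : Cone.basePt X z ∈ A := hzA
      rw [Cone.basePt_eq_arbitrary hz] at this
      exact harb this
    rw [this]; exact MeasurableSet.empty

end Aux


theorem map_withDensity_aux {δ ε : Type*} [MeasurableSpace δ] [MeasurableSpace ε]
    (μ : Measure δ) {f : δ → ε} (hf : Measurable f) {g : ε → ℝ≥0∞} (hg : Measurable g) :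
    (Measure.map f μ).withDensity g = Measure.map f (μ.withDensity fun x => g (f x)) := by
  ext s hs
  rw [withDensity_apply _ hs, Measure.map_apply hf hs, withDensity_apply _ (hf hs),
    setLIntegral_map hs hg hf]

/-- For any `α ∈ M₊¹(C[X₁]×C[X₂])` the rescaled measure
`dil_{ϑ_{α,1},1}(α)` is a probability measure with the same `1`-homogeneous marginals as `α`,
supported in the truncated cone `C_{r*(α)}[X₁, X₂]`. -/
theorem dilation_to_probability
    [T2Space X₁] [T2Space X₂] [CompletelyRegularSpace X₁] [CompletelyRegularSpace X₂]
    [MeasurableSpace X₁] [BorelSpace X₁] [MeasurableSpace X₂] [BorelSpace X₂]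
    (α : Measure (Cone X₁ × Cone X₂)) [IsFiniteMeasure α] (hα : α ≠ 0)
    (hmom : ∫⁻ y, ((Cone.radius X₁ y.1 : ℝ≥0∞) + (Cone.radius X₂ y.2 : ℝ≥0∞)) ∂α ≠ ⊤) :
    IsProbabilityMeasure (dil 1 (thetaStar α) α) ∧
      homMarginalFst 1 (dil 1 (thetaStar α) α) = homMarginalFst 1 α ∧
      homMarginalSnd 1 (dil 1 (thetaStar α) α) = homMarginalSnd 1 α ∧
      dil 1 (thetaStar α) α (prodConeTrunc (rStar α))ᶜ = 0 := by
  classical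
  set θ := thetaStar α with hθdef
  set f : Cone X₁ × Cone X₂ → Cone X₁ × Cone X₂ :=
    fun y => (Cone.smul X₁ (θ y)⁻¹ y.1, Cone.smul X₂ (θ y)⁻¹ y.2) with hfdef
  set vp : Cone X₁ × Cone X₂ := (Cone.vertex X₁, Cone.vertex X₂) with hvpdef
  have hr1c : Continuous fun y : Cone X₁ × Cone X₂ => Cone.radius X₁ y.1 :=
    Cone.continuous_radius.comp continuous_fst
  have hr2c : Continuous fun y : Cone X₁ × Cone X₂ => Cone.radius X₂ y.2 :=
    Cone.continuous_radius.comp continuous_snd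
  have hrsumc : Continuous fun y : Cone X₁ × Cone X₂ =>
      Cone.radius X₁ y.1 + Cone.radius X₂ y.2 := hr1c.add hr2c
  have hvp_char : ∀ y : Cone X₁ × Cone X₂,
      Cone.radius X₁ y.1 + Cone.radius X₂ y.2 = 0 ↔ y = vp := by
    intro y
    constructor
    · intro h
      have h1 := Cone.eq_vertex (X := X₁) (add_eq_zero.1 h).1
      have h2 := Cone.eq_vertex (X := X₂) (add_eq_zero.1 h).2
      rw [hvpdef]
      exact Prod.ext h1 h2
    · rintro rfl
      rw [hvpdef]
      show Cone.radius X₁ (Cone.vertex X₁) + Cone.radius X₂ (Cone.vertex X₂) = 0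
      rw [Cone.radius_vertex, Cone.radius_vertex, add_zero]
  have hvp_set : {y : Cone X₁ × Cone X₂ | Cone.radius X₁ y.1 + Cone.radius X₂ y.2 = 0}
      = {vp} := by
    ext y; simpa using hvp_char y
  have hvp_closed : IsClosed ({vp} : Set (Cone X₁ × Cone X₂)) := by
    rw [← hvp_set]
    exact isClosed_singleton.preimage hrsumc
  have hvp_meas : MeasurableSet ({vp} : Set (Cone X₁ × Cone X₂)) := hvp_closed.measurableSet
  set I := ∫⁻ y, ((Cone.radius X₁ y.1 : ℝ≥0∞) + (Cone.radius X₂ y.2 : ℝ≥0∞)) ∂α with hIdef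
  have hfin : I + α {vp} ≠ ⊤ := ENNReal.add_ne_top.2 ⟨hmom, measure_ne_top α _⟩
  have hcoe : ((rStar α : ℝ≥0) : ℝ≥0∞) = I + α {vp} := ENNReal.coe_toNNReal hfin
  have hsum_meas : Measurable fun y : Cone X₁ × Cone X₂ =>
      ((Cone.radius X₁ y.1 + Cone.radius X₂ y.2 : ℝ≥0) : ℝ≥0∞) :=
    measurable_coe_nnreal_ennreal.comp hrsumc.measurable
  have htot : ∫⁻ y, ((Cone.radius X₁ y.1 + Cone.radius X₂ y.2 : ℝ≥0) : ℝ≥0∞) ∂α = I := by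
    rw [hIdef]
    exact lintegral_congr fun y => by rw [ENNReal.coe_add]
  have hrs0 : rStar α ≠ 0 := by
    intro h0
    have hz : I + α {vp} = 0 := by rw [← hcoe, h0, ENNReal.coe_zero]
    have hI : I = 0 := (add_eq_zero.1 hz).1
    have hm : α {vp} = 0 := (add_eq_zero.1 hz).2
    have hI' : ∫⁻ y, ((Cone.radius X₁ y.1 + Cone.radius X₂ y.2 : ℝ≥0) : ℝ≥0∞) ∂α = 0 := by
      rw [htot, hI]
    have hae := (lintegral_eq_zero_iff hsum_meas).1 hI'
    have hcompl : α ({vp}ᶜ) = 0 := by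
      refine measure_mono_null ?_ hae
      intro y hy
      simp only [mem_compl_iff, mem_singleton_iff] at hy
      show ¬ ((Cone.radius X₁ y.1 + Cone.radius X₂ y.2 : ℝ≥0) : ℝ≥0∞) = 0
      rw [ENNReal.coe_eq_zero]
      exact fun h => hy ((hvp_char y).1 h)
    have huniv : α univ = 0 := by
      rw [← measure_add_measure_compl hvp_meas, hm, hcompl, add_zero]
    exact hα (Measure.measure_univ_eq_zero.1 huniv)
  have hθ0 : ∀ y, θ y ≠ 0 := by
    intro y
    rw [hθdef]
    simp only [thetaStar]
    split_ifs with h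
    · exact inv_ne_zero hrs0
    · exact div_ne_zero (fun hh => h ((hvp_char y).1 hh)) hrs0
  have hθg : Continuous fun y : Cone X₁ × Cone X₂ =>
      (Cone.radius X₁ y.1 + Cone.radius X₂ y.2) / rStar α := hrsumc.div_const _
  have hθeq : θ = fun y => if y = vp then (rStar α)⁻¹
      else (Cone.radius X₁ y.1 + Cone.radius X₂ y.2) / rStar α := by
    funext y; rw [hθdef]; rfl
  have hθmeas : Measurable θ := by
    rw [hθeq]
    refine Measurable.ite ?_ measurable_const hθg.measurable
    rw [show {y : Cone X₁ × Cone X₂ | y = vp} = {vp} from Set.setOf_eq_eq_singleton]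
    exact hvp_meas
  have hθemeas : Measurable fun y => (θ y : ℝ≥0∞) := measurable_coe_nnreal_ennreal.comp hθmeas
  have hθO : ContinuousOn θ ({vp}ᶜ) := by
    refine hθg.continuousOn.congr fun y hy => ?_
    rw [hθdef]
    exact if_neg hy
  have hinvO : ContinuousOn (fun y : Cone X₁ × Cone X₂ => (θ y)⁻¹) ({vp}ᶜ) :=
    hθO.inv₀ fun y _ => hθ0 y
  have hfO : ContinuousOn f ({vp}ᶜ) := by
    rw [hfdef]
    exact (Cone.continuous_smul_pair.comp_continuousOn
        (hinvO.prodMk continuous_fst.continuousOn)).prodMk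
      (Cone.continuous_smul_pair.comp_continuousOn
        (hinvO.prodMk continuous_snd.continuousOn))
  have hfvp : f vp = vp := by
    rw [hfdef, hvpdef]
    show (Cone.smul X₁ _ (Cone.vertex X₁), Cone.smul X₂ _ (Cone.vertex X₂)) = _
    rw [Cone.smul_vertex, Cone.smul_vertex]
  have hfmeas : Measurable f := by
    apply measurable_of_isOpen
    intro U hU
    have hsplit : f ⁻¹' U = ({vp}ᶜ ∩ f ⁻¹' U) ∪ ({vp} ∩ f ⁻¹' U) := by
      ext y; by_cases hy : y = vp <;> simp [hy]
    rw [hsplit]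
    refine (hfO.isOpen_inter_preimage hvp_closed.isOpen_compl hU).measurableSet.union ?_
    by_cases hvpU : vp ∈ U
    · have : {vp} ∩ f ⁻¹' U = {vp} := by
        refine inter_eq_left.2 fun y hy => ?_
        rw [mem_singleton_iff] at hy
        show f y ∈ U
        rw [hy, hfvp]
        exact hvpU
      rw [this]; exact hvp_meas
    · have : {vp} ∩ f ⁻¹' U = ∅ := by
        refine eq_empty_iff_forall_notMem.2 ?_
        rintro y ⟨hy1, hy2⟩
        rw [mem_singleton_iff] at hy1
        have : f y ∈ U := hy2
        rw [hy1, hfvp] at this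
        exact hvpU this
      rw [this]; exact MeasurableSet.empty
  have hR1meas : Measurable fun y : Cone X₁ × Cone X₂ => (Cone.radius X₁ y.1 : ℝ≥0∞) :=
    measurable_coe_nnreal_ennreal.comp hr1c.measurable
  have hR2meas : Measurable fun y : Cone X₁ × Cone X₂ => (Cone.radius X₂ y.2 : ℝ≥0∞) :=
    measurable_coe_nnreal_ennreal.comp hr2c.measurable
  have hb1meas : Measurable fun y : Cone X₁ × Cone X₂ => Cone.basePt X₁ y.1 :=
    Cone.measurable_basePt.comp continuous_fst.measurable
  have hb2meas : Measurable fun y : Cone X₁ × Cone X₂ => Cone.basePt X₂ y.2 :=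
    Cone.measurable_basePt.comp continuous_snd.measurable
  have hdil : dil 1 θ α = Measure.map f (α.withDensity fun y => (θ y : ℝ≥0∞)) := by
    rw [dil]
    simp only [ENNReal.rpow_one]
    rfl
  have hint_vp : ∫⁻ y in {vp}, (θ y : ℝ≥0∞) ∂α
      = (((rStar α)⁻¹ : ℝ≥0) : ℝ≥0∞) * α {vp} := by
    have h1 : ∫⁻ y in {vp}, (θ y : ℝ≥0∞) ∂α
        = ∫⁻ _ in {vp}, (((rStar α)⁻¹ : ℝ≥0) : ℝ≥0∞) ∂α := by
      refine setLIntegral_congr_fun hvp_meas (fun y hy => ?_)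
      rw [mem_singleton_iff] at hy
      rw [hθdef]
      simp only [thetaStar, if_pos hy]
      exact congrArg ((↑) : ℝ≥0 → ℝ≥0∞) (if_pos hy)
    rw [h1, setLIntegral_const]
  have hint_c : ∫⁻ y in {vp}ᶜ, (θ y : ℝ≥0∞) ∂α = I * ((rStar α : ℝ≥0∞))⁻¹ := by
    have h1 : ∫⁻ y in {vp}ᶜ, (θ y : ℝ≥0∞) ∂α
        = ∫⁻ y in {vp}ᶜ, (((Cone.radius X₁ y.1 + Cone.radius X₂ y.2 : ℝ≥0) : ℝ≥0∞)
            * ((rStar α : ℝ≥0∞))⁻¹) ∂α := by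
      refine setLIntegral_congr_fun hvp_meas.compl (fun y hy => ?_)
      have hy' : y ≠ vp := hy
      have hθy : θ y = (Cone.radius X₁ y.1 + Cone.radius X₂ y.2) / rStar α := by
        rw [hθdef]; exact if_neg hy'
      rw [hθy, ENNReal.coe_div hrs0, div_eq_mul_inv]
    rw [h1, lintegral_mul_const _ hsum_meas]
    congr 1
    have h2 : ∫⁻ y in {vp}, ((Cone.radius X₁ y.1 + Cone.radius X₂ y.2 : ℝ≥0) : ℝ≥0∞) ∂α
        = 0 := by
      have h3 : ∫⁻ y in {vp}, ((Cone.radius X₁ y.1 + Cone.radius X₂ y.2 : ℝ≥0) : ℝ≥0∞) ∂α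
          = ∫⁻ _ in {vp}, (0 : ℝ≥0∞) ∂α := by
        refine setLIntegral_congr_fun hvp_meas (fun y hy => ?_)
        rw [mem_singleton_iff] at hy
        rw [ENNReal.coe_eq_zero, (hvp_char y).2 hy]
      rw [h3, lintegral_zero]
    have h4 := lintegral_add_compl
      (fun y : Cone X₁ × Cone X₂ => ((Cone.radius X₁ y.1 + Cone.radius X₂ y.2 : ℝ≥0) : ℝ≥0∞))
      hvp_meas (μ := α)
    rw [← htot, ← h4, h2, zero_add]
  have hbound : ∀ y : Cone X₁ × Cone X₂, f y ∈ prodConeTrunc (rStar α) := by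
    intro y
    by_cases hy : y = vp
    · subst hy
      rw [hfvp, hvpdef]
      refine ⟨?_, ?_⟩
      · show Cone.radius X₁ (Cone.vertex X₁) ≤ rStar α
        rw [Cone.radius_vertex]; exact zero_le
      · show Cone.radius X₂ (Cone.vertex X₂) ≤ rStar α
        rw [Cone.radius_vertex]; exact zero_le
    · have hsum : Cone.radius X₁ y.1 + Cone.radius X₂ y.2 ≠ 0 :=
        fun h => hy ((hvp_char y).1 h)
      have hsumpos : 0 < Cone.radius X₁ y.1 + Cone.radius X₂ y.2 := pos_iff_ne_zero.2 hsum
      have hθy : θ y = (Cone.radius X₁ y.1 + Cone.radius X₂ y.2) / rStar α := by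
        rw [hθdef]; exact if_neg hy
      refine ⟨?_, ?_⟩
      · show Cone.radius X₁ (Cone.smul X₁ (θ y)⁻¹ y.1) ≤ rStar α
        rw [Cone.radius_smul, hθy, inv_div, div_mul_eq_mul_div, div_le_iff₀ hsumpos]
        exact mul_le_mul_right (le_add_right le_rfl) _
      · show Cone.radius X₂ (Cone.smul X₂ (θ y)⁻¹ y.2) ≤ rStar α
        rw [Cone.radius_smul, hθy, inv_div, div_mul_eq_mul_div, div_le_iff₀ hsumpos]
        exact mul_le_mul_right (le_add_left le_rfl) _
  have htrunc_meas : MeasurableSet (prodConeTrunc (rStar α) :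
      Set (Cone X₁ × Cone X₂)) := by
    have : IsClosed (prodConeTrunc (rStar α) : Set (Cone X₁ × Cone X₂)) := by
      have h1 : IsClosed {y : Cone X₁ × Cone X₂ | Cone.radius X₁ y.1 ≤ rStar α} :=
        isClosed_le hr1c continuous_const
      have h2 : IsClosed {y : Cone X₁ × Cone X₂ | Cone.radius X₂ y.2 ≤ rStar α} :=
        isClosed_le hr2c continuous_const
      exact h1.inter h2
    exact this.measurableSet
  refine ⟨?_, ?_, ?_, ?_⟩
  · constructor
    rw [hdil, Measure.map_apply hfmeas MeasurableSet.univ, preimage_univ,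
      withDensity_apply _ MeasurableSet.univ, Measure.restrict_univ,
      ← lintegral_add_compl _ hvp_meas, hint_vp, hint_c,
      ENNReal.coe_inv hrs0, mul_comm ((rStar α : ℝ≥0∞))⁻¹ (α {vp}), ← add_mul,
      add_comm (α {vp}) I, ← hcoe]
    exact ENNReal.mul_inv_cancel (ENNReal.coe_ne_zero.2 hrs0) ENNReal.coe_ne_top
  · rw [hdil]
    simp only [homMarginalFst, ENNReal.rpow_one]
    rw [map_withDensity_aux _ hfmeas hR1meas]
    have hd : (α.withDensity fun y => (θ y : ℝ≥0∞)).withDensity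
        (fun y => ((Cone.radius X₁ (f y).1 : ℝ≥0∞)))
        = α.withDensity fun y => (Cone.radius X₁ y.1 : ℝ≥0∞) := by
      have hcm : Measurable fun y => (Cone.radius X₁ ((f y).1) : ℝ≥0∞) :=
        hR1meas.comp hfmeas
      rw [← withDensity_mul _ hθemeas hcm]
      congr 1
      funext y
      have h1 : Cone.radius X₁ (f y).1 = (θ y)⁻¹ * Cone.radius X₁ y.1 := by
        simp only [hfdef]
        exact Cone.radius_smul _ _
      show (θ y : ℝ≥0∞) * ((Cone.radius X₁ (f y).1 : ℝ≥0)) = _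
      rw [h1, ← ENNReal.coe_mul, mul_inv_cancel_left₀ (hθ0 y)]
    rw [hd, Measure.map_map hb1meas hfmeas]
    congr 1
    funext y
    show Cone.basePt X₁ (f y).1 = Cone.basePt X₁ y.1
    simp only [hfdef]
    exact Cone.basePt_smul (inv_ne_zero (hθ0 y)) _
  · rw [hdil]
    simp only [homMarginalSnd, ENNReal.rpow_one]
    rw [map_withDensity_aux _ hfmeas hR2meas]
    have hd : (α.withDensity fun y => (θ y : ℝ≥0∞)).withDensity
        (fun y => ((Cone.radius X₂ (f y).2 : ℝ≥0∞)))
        = α.withDensity fun y => (Cone.radius X₂ y.2 : ℝ≥0∞) := by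
      have hcm : Measurable fun y => (Cone.radius X₂ ((f y).2) : ℝ≥0∞) :=
        hR2meas.comp hfmeas
      rw [← withDensity_mul _ hθemeas hcm]
      congr 1
      funext y
      have h1 : Cone.radius X₂ (f y).2 = (θ y)⁻¹ * Cone.radius X₂ y.2 := by
        simp only [hfdef]
        exact Cone.radius_smul _ _
      show (θ y : ℝ≥0∞) * ((Cone.radius X₂ (f y).2 : ℝ≥0)) = _
      rw [h1, ← ENNReal.coe_mul, mul_inv_cancel_left₀ (hθ0 y)]
    rw [hd, Measure.map_map hb2meas hfmeas]
    congr 1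
    funext y
    show Cone.basePt X₂ (f y).2 = Cone.basePt X₂ y.2
    simp only [hfdef]
    exact Cone.basePt_smul (inv_ne_zero (hθ0 y)) _
  · rw [hdil, Measure.map_apply hfmeas htrunc_meas.compl]
    rw [show f ⁻¹' (prodConeTrunc (rStar α))ᶜ = ∅ from
      eq_empty_iff_forall_notMem.2 fun y hy => hy (hbound y), measure_empty]


end UOT
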